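/- arXiv:0710.0121 — 12 statements merged into one kernel-verified Lean document; each statement's English description precedes it below -/
import Mathlib

section
/- For complex numbers A₁, B₁, A₂, B₂ with A₁(A₁+B₁)≠0 and A₂(A₂+B₂)≠0, the composition T_{A₂,B₂} ∘ T_{A₁,B₁} equals T_{A₁A₂, A₁B₂+A₂B₁+B₁B₂} as maps on ℂ³. -/
set_option maxHeartbeats 1000000

noncomputable def T (A B : ℂ) (p : ℂ × ℂ × ℂ) : ℂ × ℂ × ℂ :=
  ((A + B) * p.1 / A ^ 2,
   ((A + B) * p.2.1 - 2 * A * B * p.1 * ((A + B) * p.1 / A ^ 2)) / A ^ 3,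
   (A * p.2.2 + B * p.2.1 - 2 * A * B * p.1 * ((A + B) * p.1 / A ^ 2)) / A ^ 3)

theorem T_comp (A₁ B₁ A₂ B₂ : ℂ) (h1 : A₁ * (A₁ + B₁) ≠ 0) (h2 : A₂ * (A₂ + B₂) ≠ 0) :
    T A₂ B₂ ∘ T A₁ B₁ = T (A₁ * A₂) (A₁ * B₂ + A₂ * B₁ + B₁ * B₂) := by
  have hA1 : A₁ ≠ 0 := fun h => h1 (by simp [h])
  have hA2 : A₂ ≠ 0 := fun h => h2 (by simp [h])
  funext p
  obtain ⟨x, y, z⟩ := p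
  simp only [Function.comp, T, Prod.mk.injEq, mul_pow]
  refine ⟨?_, ?_, ?_⟩ <;>
    · field_simp
      try rw [div_eq_iff (by simp [pow_eq_zero_iff, mul_eq_zero, hA1, hA2])]
      ring
end

section
/- Let A, B ∈ ℂ with A(A+B) ≠ 0, let (a₃, a₄, θ) ∈ ℂ³ and let (a₃', a₄', θ') = T_{A,B}(a₃, a₄, θ). Then a₄' + 2a₃'² = (A+B)(a₄ + 2a₃²)/A³ and θ' − a₄' = (θ − a₄)/A². -/
theorem T_invariants (A B : ℂ) (h : A * (A + B) ≠ 0) (a₃ a₄ θ : ℂ) :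
    (T A B (a₃, a₄, θ)).2.1 + 2 * (T A B (a₃, a₄, θ)).1 ^ 2
      = (A + B) * (a₄ + 2 * a₃ ^ 2) / A ^ 3 ∧
    (T A B (a₃, a₄, θ)).2.2 - (T A B (a₃, a₄, θ)).2.1 = (θ - a₄) / A ^ 2 := by
  have hA : A ≠ 0 := fun hA => h (by simp [hA])
  constructor <;> simp only [T] <;> field_simp <;> ring
end

section
/- Let A, B ∈ ℂ with A(A+B) ≠ 0, let (a₃, a₄, θ) ∈ ℂ³ with a₃ ≠ 0 and Δ₄ := a₄ + 2a₃² ≠ 0, and let (a₃', a₄', θ') = T_{A,B}(a₃, a₄, θ), with Δ₄' := a₄' + 2a₃'². Then a₃' ≠ 0, Δ₄' ≠ 0, and (a₃/Δ₄)²·(θ − a₄) = (a₃'/Δ₄')²·(θ' − a₄'). -/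
theorem T_U1_invariant (A B : ℂ) (h : A * (A + B) ≠ 0) (a₃ a₄ θ : ℂ)
    (h3 : a₃ ≠ 0) (h4 : a₄ + 2 * a₃ ^ 2 ≠ 0)
    (a₃' a₄' θ' : ℂ) (heq : (a₃', a₄', θ') = T A B (a₃, a₄, θ)) :
    a₃' ≠ 0 ∧ a₄' + 2 * a₃' ^ 2 ≠ 0 ∧
    (a₃ / (a₄ + 2 * a₃ ^ 2)) ^ 2 * (θ - a₄)
      = (a₃' / (a₄' + 2 * a₃' ^ 2)) ^ 2 * (θ' - a₄') := by
  obtain ⟨hA, hAB⟩ := mul_ne_zero_iff.mp h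
  simp only [T, Prod.mk.injEq] at heq
  obtain ⟨h1, h2, h5⟩ := heq
  subst h1; subst h2; subst h5
  have hΔ' : ((A + B) * a₄ - 2 * A * B * a₃ * ((A + B) * a₃ / A ^ 2)) / A ^ 3
      + 2 * ((A + B) * a₃ / A ^ 2) ^ 2 = (A + B) * (a₄ + 2 * a₃ ^ 2) / A ^ 3 := by
    field_simp
    ring
  refine ⟨div_ne_zero (mul_ne_zero hAB h3) (pow_ne_zero 2 hA), ?_, ?_⟩
  · rw [hΔ']
    exact div_ne_zero (mul_ne_zero hAB h4) (pow_ne_zero 3 hA)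
  · rw [hΔ']
    field_simp
    ring
end

section
/- Let (a₃, a₄, θ) ∈ ℂ³ with a₃ ≠ 0 and Δ₄ := a₄ + 2a₃² ≠ 0. Then there exist A, B ∈ ℂ with A(A+B) ≠ 0 and some λ ∈ ℂ such that T_{A,B}(a₃, a₄, θ) = (1, 0, λ); in fact one may take A = Δ₄/(2a₃) and B = Δ₄²/(4a₃³) − Δ₄/(2a₃). -/
theorem T_U1_normal_form (a₃ a₄ θ : ℂ) (h3 : a₃ ≠ 0) (h4 : a₄ + 2 * a₃ ^ 2 ≠ 0) :
    let A := (a₄ + 2 * a₃ ^ 2) / (2 * a₃)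
    let B := (a₄ + 2 * a₃ ^ 2) ^ 2 / (4 * a₃ ^ 3) - (a₄ + 2 * a₃ ^ 2) / (2 * a₃)
    A * (A + B) ≠ 0 ∧ ∃ lam : ℂ, T A B (a₃, a₄, θ) = (1, 0, lam) := by
  intro A B
  have hA : A ≠ 0 := div_ne_zero h4 (by simpa using h3)
  have hAB : A + B = (a₄ + 2 * a₃ ^ 2) ^ 2 / (4 * a₃ ^ 3) := by
    simp only [A, B]; ring
  have h1 : (A + B) * a₃ / A ^ 2 = 1 := by
    rw [hAB]; simp only [A]; field_simp; ring
  have key : (A + B) * a₄ - 2 * A * B * a₃ = 0 := by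
    rw [hAB]
    show _ - 2 * ((a₄ + 2 * a₃ ^ 2) / (2 * a₃)) * B * a₃ = 0
    simp only [B]
    have h5 : a₃ ^ 5 * a₃⁻¹ ^ 5 = 1 := by
      rw [← mul_pow, mul_inv_cancel₀ h3, one_pow]
    field_simp
    linear_combination
  constructor
  · refine mul_ne_zero hA ?_
    rw [hAB]
    exact div_ne_zero (pow_ne_zero _ h4) (by simpa using pow_ne_zero 3 h3)
  · refine ⟨(A * θ + B * a₄ - 2 * A * B * a₃ * ((A + B) * a₃ / A ^ 2)) / A ^ 3, ?_⟩
    simp only [T]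
    refine Prod.ext h1 (Prod.ext ?_ rfl)
    show ((A + B) * a₄ - 2 * A * B * a₃ * ((A + B) * a₃ / A ^ 2)) / A ^ 3 = 0
    rw [h1, mul_one, key, zero_div]
end

section
/- Let λ, μ ∈ ℂ and A, B ∈ ℂ with A(A+B) ≠ 0. If T_{A,B}(1, 0, λ) = (1, 0, μ), then A = 1, B = 0, and λ = μ. In particular, the algebras L(1,0,λ) for distinct λ are pairwise non-isomorphic. -/
theorem T_fixes_canonical (lam mu A B : ℂ) (h : A * (A + B) ≠ 0)
    (heq : T A B (1, 0, lam) = (1, 0, mu)) :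
    A = 1 ∧ B = 0 ∧ lam = mu := by
  have hA : A ≠ 0 := fun hA => h (by simp [hA])
  have hAB : A + B ≠ 0 := fun hAB => h (by simp [hAB])
  simp only [T, Prod.mk.injEq] at heq
  obtain ⟨h1, h2, h3⟩ := heq
  rw [div_eq_one_iff_eq (pow_ne_zero 2 hA)] at h1
  rw [div_eq_iff (pow_ne_zero 3 hA)] at h2 h3
  -- h1 : (A+B)*1 = A^2
  have hB : B = 0 := by
    rw [← h1] at h2
    field_simp at h2
    replace h2 : 2 * A * B = 0 := by linear_combination -h2
    rcases mul_eq_zero.mp h2 with h' | h'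
    · rcases mul_eq_zero.mp h' with h'' | h''
      · exact absurd h'' two_ne_zero
      · exact absurd h'' hA
    · exact h'
  subst hB
  have hA1 : A = 1 := by
    have : A * (A - 1) = 0 := by linear_combination -h1
    rcases mul_eq_zero.mp this with h' | h'
    · exact absurd h' hA
    · linear_combination h'
  subst hA1
  refine ⟨rfl, rfl, ?_⟩
  simp at h3
  linear_combination h3
end

section
/- Let (a₃, a₄, θ) ∈ ℂ³ with a₃ ≠ 0, a₄ + 2a₃² = 0, and θ ≠ a₄. Then there exist A, B ∈ ℂ with A(A+B) ≠ 0 such that T_{A,B}(a₃, a₄, θ) = (1, −2, 0). -/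
theorem T_U2_normal_form (a₃ a₄ θ : ℂ) (h3 : a₃ ≠ 0) (h4 : a₄ + 2 * a₃ ^ 2 = 0)
    (hθ : θ ≠ a₄) :
    ∃ A B : ℂ, A * (A + B) ≠ 0 ∧ T A B (a₃, a₄, θ) = (1, -2, 0) := by
  obtain ⟨A, hA⟩ := Complex.isAlgClosed.exists_pow_nat_eq ((θ - a₄) / 2) (n := 2) (by norm_num)
  have hθ' : θ - a₄ ≠ 0 := sub_ne_zero.mpr hθ
  have hA0 : A ≠ 0 := by
    intro h
    apply hθ'
    have := hA
    rw [h] at this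
    field_simp at this
    linear_combination -this
  refine ⟨A, A ^ 2 / a₃ - A, ?_, ?_⟩
  · have : A + (A ^ 2 / a₃ - A) = A ^ 2 / a₃ := by ring
    rw [this]
    exact mul_ne_zero hA0 (div_ne_zero (pow_ne_zero _ hA0) h3)
  · have ha4 : a₄ = -2 * a₃ ^ 2 := by linear_combination h4
    simp only [T, Prod.mk.injEq]
    refine ⟨?_, ?_, ?_⟩
    · field_simp
      ring
    · field_simp
      linear_combination A * h4
    · rw [div_eq_zero_iff]
      left
      field_simp
      rw [ha4] at hA ⊢
      linear_combination (-2 * A * a₃) * hA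
end

section
/- There are no A, B ∈ ℂ with A(A+B) ≠ 0 such that T_{A,B}(1, −2, 0) = (1, −2, −2). In particular the 5-dimensional filiform Leibniz algebras L(1,−2,0) and L(1,−2,−2) are not isomorphic. -/
theorem T_not_isomorphic :
    ¬ ∃ A B : ℂ, A * (A + B) ≠ 0 ∧ T A B (1, -2, 0) = (1, -2, -2) := by
  rintro ⟨A, B, hAB, h⟩
  have hA : A ≠ 0 := fun h0 => hAB (by simp [h0])
  simp only [T, Prod.mk.injEq] at h
  obtain ⟨h1, h2, h3⟩ := h
  have key : (A * 0 + B * (-2 : ℂ) - 2 * A * B * 1 * ((A + B) * 1 / A ^ 2)) / A ^ 3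
      - ((A + B) * (-2 : ℂ) - 2 * A * B * 1 * ((A + B) * 1 / A ^ 2)) / A ^ 3 = 0 := by
    rw [h2, h3]; ring
  rw [div_sub_div_same] at key
  have h4 : (2 : ℂ) * A = 0 := by
    have := (div_eq_zero_iff.mp key).resolve_right (pow_ne_zero 3 hA)
    linear_combination this
  simp [hA] at h4
end

section
/- Let A, B ∈ ℂ with A(A+B) ≠ 0, let a₅, a₆, θ ∈ ℂ with a₅ ≠ 0 and a₆ ≠ 0, and define a₅' = (A+B)a₅/A⁴, a₆' = (A+B)a₆/A⁵, θ' = (Aθ + Ba₆)/A⁵. Then a₅' ≠ 0, a₆' ≠ 0, and (a₅/a₆)⁴·(θ − a₆) = (a₅'/a₆')⁴·(θ' − a₆'). -/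
theorem dim7_stratum_invariant (A B : ℂ) (h : A * (A + B) ≠ 0) (a₅ a₆ θ : ℂ)
    (h5 : a₅ ≠ 0) (h6 : a₆ ≠ 0) :
    (A + B) * a₅ / A ^ 4 ≠ 0 ∧ (A + B) * a₆ / A ^ 5 ≠ 0 ∧
    (a₅ / a₆) ^ 4 * (θ - a₆)
      = ((A + B) * a₅ / A ^ 4 / ((A + B) * a₆ / A ^ 5)) ^ 4
          * ((A * θ + B * a₆) / A ^ 5 - (A + B) * a₆ / A ^ 5) := by
  have hA : A ≠ 0 := fun hA => h (by simp [hA])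
  have hAB : A + B ≠ 0 := fun hAB => h (by simp [hAB])
  refine ⟨by simp [div_ne_zero, mul_ne_zero, hAB, h5, h6, hA, pow_ne_zero], by simp [div_ne_zero, mul_ne_zero, hAB, h5, h6, hA, pow_ne_zero], ?_⟩
  field_simp
  ring
end

section
/- Let A, B ∈ ℂ with A(A+B) ≠ 0, let a₄, a₆, θ ∈ ℂ with a₄ ≠ 0, a₆ + 3a₄² ≠ 0, and θ ≠ a₆, and define a₄' = (A+B)a₄/A³, a₆' = (A+B)(Aa₆ − 3Ba₄²)/A⁶, θ' = (A²θ + ABa₆ − 3B(A+B)a₄²)/A⁶. Then a₄' ≠ 0, a₆' + 3a₄'² ≠ 0, θ' ≠ a₆', and (a₆ + 3a₄²)²/(a₄²(θ − a₆)) = (a₆' + 3a₄'²)²/(a₄'²(θ' − a₆')). -/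
theorem dim7_stratum2_invariant (A B : ℂ) (h : A * (A + B) ≠ 0) (a₄ a₆ θ : ℂ)
    (h4 : a₄ ≠ 0) (h6 : a₆ + 3 * a₄ ^ 2 ≠ 0) (hθ : θ ≠ a₆) :
    (A + B) * a₄ / A ^ 3 ≠ 0 ∧
    (A + B) * (A * a₆ - 3 * B * a₄ ^ 2) / A ^ 6 + 3 * ((A + B) * a₄ / A ^ 3) ^ 2 ≠ 0 ∧
    (A ^ 2 * θ + A * B * a₆ - 3 * B * (A + B) * a₄ ^ 2) / A ^ 6
      ≠ (A + B) * (A * a₆ - 3 * B * a₄ ^ 2) / A ^ 6 ∧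
    (a₆ + 3 * a₄ ^ 2) ^ 2 / (a₄ ^ 2 * (θ - a₆))
      = ((A + B) * (A * a₆ - 3 * B * a₄ ^ 2) / A ^ 6 + 3 * ((A + B) * a₄ / A ^ 3) ^ 2) ^ 2
          / (((A + B) * a₄ / A ^ 3) ^ 2
              * ((A ^ 2 * θ + A * B * a₆ - 3 * B * (A + B) * a₄ ^ 2) / A ^ 6
                  - (A + B) * (A * a₆ - 3 * B * a₄ ^ 2) / A ^ 6)) := by
  obtain ⟨hA, hAB⟩ : A ≠ 0 ∧ A + B ≠ 0 := ⟨left_ne_zero_of_mul h, right_ne_zero_of_mul h⟩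
  have hθ' : θ - a₆ ≠ 0 := sub_ne_zero.mpr hθ
  have key2 : (A + B) * (A * a₆ - 3 * B * a₄ ^ 2) / A ^ 6 + 3 * ((A + B) * a₄ / A ^ 3) ^ 2
      = (A + B) * (a₆ + 3 * a₄ ^ 2) / A ^ 5 := by
    field_simp
    ring
  have key3 : (A ^ 2 * θ + A * B * a₆ - 3 * B * (A + B) * a₄ ^ 2) / A ^ 6
      - (A + B) * (A * a₆ - 3 * B * a₄ ^ 2) / A ^ 6 = (θ - a₆) / A ^ 4 := by
    field_simp
    ring
  refine ⟨div_ne_zero (mul_ne_zero hAB h4) (pow_ne_zero _ hA), ?_, ?_, ?_⟩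
  · rw [key2]
    exact div_ne_zero (mul_ne_zero hAB h6) (pow_ne_zero _ hA)
  · rw [← sub_ne_zero, key3]
    exact div_ne_zero hθ' (pow_ne_zero _ hA)
  · rw [key2, key3]
    rw [div_pow, div_pow, div_mul_div_comm, div_div_div_eq]
    rw [mul_pow]
    field_simp
end

section
/- Let A, B ∈ ℂ with A(A+B) ≠ 0, let a₆, a₇, θ ∈ ℂ with a₆ ≠ 0 and a₇ ≠ 0, and define a₆' = (A+B)a₆/A⁵, a₇' = (A+B)a₇/A⁶, θ' = (Aθ + Ba₇)/A⁶. Then a₆' ≠ 0, a₇' ≠ 0, and (a₆/a₇)⁵·(θ − a₇) = (a₆'/a₇')⁵·(θ' − a₇'). -/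
theorem dim8_stratum_invariant (A B : ℂ) (h : A * (A + B) ≠ 0) (a₆ a₇ θ : ℂ)
    (h6 : a₆ ≠ 0) (h7 : a₇ ≠ 0) :
    (A + B) * a₆ / A ^ 5 ≠ 0 ∧ (A + B) * a₇ / A ^ 6 ≠ 0 ∧
    (a₆ / a₇) ^ 5 * (θ - a₇)
      = ((A + B) * a₆ / A ^ 5 / ((A + B) * a₇ / A ^ 6)) ^ 5
          * ((A * θ + B * a₇) / A ^ 6 - (A + B) * a₇ / A ^ 6) := by
  have hA : A ≠ 0 := fun hA => h (by simp [hA])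
  have hAB : A + B ≠ 0 := fun hAB => h (by simp [hAB])
  refine ⟨by simp [div_eq_zero_iff, hA, hAB, h6, pow_ne_zero], by simp [div_eq_zero_iff, hA, hAB, h7, pow_ne_zero], ?_⟩
  field_simp
  ring
end

section
/- Let A, B ∈ ℂ with A(A+B) ≠ 0, let a₅, a₇, θ ∈ ℂ with a₅ ≠ 0, a₇ ≠ 0, and θ ≠ a₇, and define a₅' = (A+B)a₅/A⁴, a₇' = (A+B)a₇/A⁶, θ' = (Aθ + Ba₇)/A⁶. Then a₅' ≠ 0, a₇' ≠ 0, θ' ≠ a₇', and a₇⁵·a₅'⁵·(θ' − a₇')² = a₇'⁵·a₅⁵·(θ − a₇)², i.e. the quantity (a₇/a₅)⁵/(θ − a₇)² is invariant. -/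
theorem dim8_stratum2_invariant (A B : ℂ) (h : A * (A + B) ≠ 0) (a₅ a₇ θ : ℂ)
    (h5 : a₅ ≠ 0) (h7 : a₇ ≠ 0) (hθ : θ ≠ a₇) :
    (A + B) * a₅ / A ^ 4 ≠ 0 ∧ (A + B) * a₇ / A ^ 6 ≠ 0 ∧
    (A * θ + B * a₇) / A ^ 6 ≠ (A + B) * a₇ / A ^ 6 ∧
    a₇ ^ 5 * ((A + B) * a₅ / A ^ 4) ^ 5
        * ((A * θ + B * a₇) / A ^ 6 - (A + B) * a₇ / A ^ 6) ^ 2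
      = ((A + B) * a₇ / A ^ 6) ^ 5 * a₅ ^ 5 * (θ - a₇) ^ 2 := by
  obtain ⟨hA, hAB⟩ : A ≠ 0 ∧ A + B ≠ 0 := by
    constructor <;> intro hh <;> apply h <;> simp [hh]
  have hθ' : θ - a₇ ≠ 0 := sub_ne_zero.mpr hθ
  refine ⟨?_, ?_, ?_, ?_⟩
  · exact div_ne_zero (mul_ne_zero hAB h5) (pow_ne_zero _ hA)
  · exact div_ne_zero (mul_ne_zero hAB h7) (pow_ne_zero _ hA)
  · intro hh
    apply hθ'
    have := sub_eq_zero.mpr hh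
    rw [div_sub_div_same, div_eq_zero_iff] at this
    rcases this with h1 | h1
    · have : A * (θ - a₇) = 0 := by ring_nf; linear_combination h1
      rcases mul_eq_zero.mp this with h2 | h2
      · exact absurd h2 hA
      · exact h2
    · exact absurd h1 (pow_ne_zero _ hA)
  · field_simp
    ring
end

section
/- Let a₇, θ ∈ ℂ with a₇ ≠ 0 and θ ≠ a₇. Then there exist A, B ∈ ℂ with A(A+B) ≠ 0 such that, setting a₇' = (A+B)a₇/A⁶ and θ' = (Aθ + Ba₇)/A⁶, one has a₇' = 1 and θ' = 0; one may take any A with A⁵ = a₇ − θ and B = −Aθ/a₇. -/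
theorem dim8_stratum3_normal_form (a₇ θ : ℂ) (h7 : a₇ ≠ 0) (hθ : θ ≠ a₇) :
    ∃ A B : ℂ, A ^ 5 = a₇ - θ ∧ B = -A * θ / a₇ ∧ A * (A + B) ≠ 0 ∧
      (A + B) * a₇ / A ^ 6 = 1 ∧ (A * θ + B * a₇) / A ^ 6 = 0 := by
  obtain ⟨A, hA⟩ := IsAlgClosed.exists_pow_nat_eq (a₇ - θ) (n := 5) (by norm_num)
  have hd : a₇ - θ ≠ 0 := sub_ne_zero.mpr (Ne.symm hθ)
  have hAne : A ≠ 0 := by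
    intro h; rw [h] at hA; simp at hA; exact hd hA.symm
  refine ⟨A, -A * θ / a₇, hA, rfl, ?_, ?_, ?_⟩
  · have : A + -A * θ / a₇ = A * (a₇ - θ) / a₇ := by field_simp; ring
    rw [this]
    exact mul_ne_zero hAne (div_ne_zero (mul_ne_zero hAne hd) h7)
  · field_simp
    linear_combination -hA
  · field_simp
    ring
end
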